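/- arXiv:1908.09168 — 3 statements merged into one kernel-verified Lean document; each statement's English description precedes it below -/
import Mathlib

section
/- An n×n S-box F : (Fin n → ZMod 2) → (Fin n → ZMod 2) is bijective if and only if for every nonzero vector a : Fin n → ZMod 2, the Boolean function x ↦ ∑ i, a i * F x i is balanced, i.e., the number of inputs x : Fin n → ZMod 2 on which it takes the value 1 equals 2^(n-1). -/
/-- A Boolean function of `n` inputs is balanced if it takes the value 1 on
exactly `2^(n-1)` inputs. -/
def BalancedBF (n : ℕ) (f : (Fin n → ZMod 2) → ZMod 2) : Prop :=
  (Finset.univ.filter (fun x : Fin n → ZMod 2 => f x = 1)).card = 2 ^ (n - 1)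

/-- An affine Boolean function of `n` inputs. -/
def IsAffineBF (n : ℕ) (l : (Fin n → ZMod 2) → ZMod 2) : Prop :=
  ∃ (a : Fin n → ZMod 2) (c : ZMod 2), ∀ x, l x = (∑ i, a i * x i) + c

/-- Hamming distance between two Boolean functions. -/
def hammingDistBF (n : ℕ) (f g : (Fin n → ZMod 2) → ZMod 2) : ℕ :=
  (Finset.univ.filter (fun x : Fin n → ZMod 2 => f x ≠ g x)).card

/-- The nonlinearity of a Boolean function: the minimal Hamming distance to an
affine Boolean function. -/
noncomputable def nonlinearity (n : ℕ) (f : (Fin n → ZMod 2) → ZMod 2) : ℕ :=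
  sInf {d | ∃ l, IsAffineBF n l ∧ d = hammingDistBF n f l}

/-- The standard basis vector `e i`. -/
def stdBasis (n : ℕ) (i : Fin n) : Fin n → ZMod 2 :=
  fun j => if j = i then 1 else 0

/-- The strict avalanche criterion. -/
def SAC (n : ℕ) (f : (Fin n → ZMod 2) → ZMod 2) : Prop :=
  ∀ i : Fin n, BalancedBF n (fun x => f x + f (x + stdBasis n i))

/-!
Write `χ(b) = (-1)^b` and `W(a) = ∑ₓ χ(a · F x)`. For `a ≠ 0` the function `x ↦ a · F x` is
balanced exactly when `W(a) = 0`, and `x ↦ χ(a · x)` is a nontrivial character, so its sum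
vanishes; this gives `W(a) = 0` when `F` is a bijection. Conversely, Fourier inversion expresses
`2ⁿ · #F⁻¹(y)` as `∑ₐ χ(a · y) W(a)`; if `W` vanishes off `0`, only `W(0) = 2ⁿ` survives, so every
fibre of `F` is a singleton.
-/

open Finset Fintype

def signChar : AddChar (ZMod 2) ℤ where
  toFun b := if b = 1 then -1 else 1
  map_zero_eq_one' := rfl
  map_add_eq_mul' := by decide

lemma signChar_eq_one_sub (b : ZMod 2) : signChar b = 1 - 2 * if b = 1 then 1 else 0 := by
  revert b; decide

section

variable {ι α : Type*} [Fintype ι] [DecidableEq ι] [Fintype α]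

def dotProductChar (a : ι → ZMod 2) : AddChar (ι → ZMod 2) ℤ where
  toFun x := signChar (a ⬝ᵥ x)
  map_zero_eq_one' := by simp
  map_add_eq_mul' x y := by simp [dotProduct_add, AddChar.map_add_eq_mul]

lemma dotProductChar_ne_one {a : ι → ZMod 2} (ha : a ≠ 0) : dotProductChar a ≠ 1 := by
  obtain ⟨i, hi⟩ := Function.ne_iff.1 ha
  refine AddChar.ne_one_iff.2 ⟨Pi.single i 1, ?_⟩
  have hai : a i = 1 := Fin.eq_one_of_ne_zero _ hi
  show signChar (a ⬝ᵥ Pi.single i 1) ≠ 1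
  rw [dotProduct_single, mul_one, hai]
  decide

lemma sum_signChar_dotProduct (a : ι → ZMod 2) :
    ∑ x, signChar (a ⬝ᵥ x) = if a = 0 then 2 ^ card ι else 0 := by
  split_ifs with ha
  · simp [ha]
  · exact AddChar.sum_eq_zero_of_ne_one (dotProductChar_ne_one ha)

lemma sum_signChar_eq (f : α → ZMod 2) :
    ∑ x, signChar (f x) = card α - 2 * #{x | f x = 1} := by
  rw [sum_congr rfl fun x _ => signChar_eq_one_sub (f x), sum_sub_distrib, ← mul_sum, sum_boole]
  simp

lemma balancedBF_iff_sum_signChar_eq_zero {n : ℕ} (hn : 0 < n) (f : (Fin n → ZMod 2) → ZMod 2) :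
    BalancedBF n f ↔ ∑ x, signChar (f x) = 0 := by
  have hpow : (2 : ℤ) ^ n = 2 * 2 ^ (n - 1) := by rw [← pow_succ', Nat.sub_add_cancel hn]
  rw [BalancedBF, sum_signChar_eq, card_fun, ZMod.card, Fintype.card_fin, ← Nat.cast_inj (R := ℤ)]
  push_cast
  omega

lemma two_pow_mul_card_fiber (G : α → ι → ZMod 2) (y : ι → ZMod 2) :
    2 ^ card ι * (#{x | G x = y} : ℤ) =
      ∑ a, signChar (a ⬝ᵥ y) * ∑ x, signChar (a ⬝ᵥ G x) := by
  calc 2 ^ card ι * (#{x | G x = y} : ℤ)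
      = ∑ x, ∑ a, signChar (a ⬝ᵥ (G x + y)) := by
        symm
        simp_rw [dotProduct_comm _ (G _ + y), sum_signChar_dotProduct, add_eq_zero_iff_eq_neg,
          ZModModule.neg_eq_self, sum_ite, sum_const_zero, add_zero, sum_const, nsmul_eq_mul,
          mul_comm]
    _ = ∑ a, signChar (a ⬝ᵥ y) * ∑ x, signChar (a ⬝ᵥ G x) := by
        simp_rw [sum_comm (γ := α), mul_sum, dotProduct_add, AddChar.map_add_eq_mul, mul_comm]

lemma two_pow_mul_card_fiber_eq_card {G : α → ι → ZMod 2}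
    (hG : ∀ a ≠ 0, ∑ x, signChar (a ⬝ᵥ G x) = 0) (y : ι → ZMod 2) :
    2 ^ card ι * (#{x | G x = y} : ℤ) = card α := by
  rw [two_pow_mul_card_fiber, Fintype.sum_eq_single 0 fun a ha => by rw [hG a ha, mul_zero]]
  simp

end

theorem sbox_bijective_iff_balanced_linear_combinations_general
    (n : ℕ) (F : (Fin n → ZMod 2) → (Fin n → ZMod 2)) :
    Function.Bijective F ↔
      ∀ a : Fin n → ZMod 2, a ≠ 0 →
        BalancedBF n (fun x => ∑ i, a i * F x i) := by
  have hbal (a : Fin n → ZMod 2) (ha : a ≠ 0) :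
      BalancedBF n (fun x => ∑ i, a i * F x i) ↔ ∑ x, signChar (a ⬝ᵥ F x) = 0 :=
    balancedBF_iff_sum_signChar_eq_zero (Function.ne_iff.1 ha).choose.pos _
  refine ⟨fun hF a ha => (hbal a ha).2 ?_,
    fun H => Finite.surjective_iff_bijective.1 fun y => ?_⟩
  · rw [hF.sum_comp (fun y => signChar (a ⬝ᵥ y)), sum_signChar_dotProduct, if_neg ha]
  · have hfiber := two_pow_mul_card_fiber_eq_card (fun a ha => (hbal a ha).1 (H a ha)) y
    simp only [card_fun, ZMod.card, Fintype.card_fin, Nat.cast_pow, Nat.cast_ofNat] at hfiber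
    have hcard : #{x | F x = y} = 1 := by
      exact_mod_cast mul_left_cancel₀ (by positivity) (hfiber.trans (mul_one _).symm)
    obtain ⟨x, hx⟩ := Finset.card_pos.1 (hcard ▸ one_pos)
    exact ⟨x, (mem_filter.1 hx).2⟩

theorem sbox_bijective_iff_balanced_linear_combinations
    (n : ℕ) (hn : 0 < n) (F : (Fin n → ZMod 2) → (Fin n → ZMod 2)) :
    Function.Bijective F ↔
      ∀ a : Fin n → ZMod 2, a ≠ 0 →
        BalancedBF n (fun x => ∑ i, a i * F x i) :=
  sbox_bijective_iff_balanced_linear_combinations_general n F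
end

section
/- Let f : (Fin n → ZMod 2) → ZMod 2 be a Boolean function and A : Matrix (Fin n) (Fin n) (ZMod 2) an invertible matrix. If for each row index i the Boolean function x ↦ f x + f (x + A i) is balanced (where A i : Fin n → ZMod 2 is the i-th row of A), then the function ψ defined by ψ x = f (fun j => ∑ i, x i * A i j) (i.e., ψ(x) = f(xA)) satisfies the strict avalanche criterion. -/
theorem sac_of_balanced_row_differences
    (n : ℕ) (hn : 0 < n) (f : (Fin n → ZMod 2) → ZMod 2)
    (A : Matrix (Fin n) (Fin n) (ZMod 2)) (hA : IsUnit A)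
    (hbal : ∀ i : Fin n, BalancedBF n (fun x => f x + f (x + A i)))
    (ψ : (Fin n → ZMod 2) → ZMod 2)
    (hψ : ∀ x, ψ x = f (fun j => ∑ i, x i * A i j)) :
    SAC n ψ := by
  obtain ⟨u⟩ := hA.nonempty_invertible
  intro i
  have hvec : ∀ x : Fin n → ZMod 2, (fun j => ∑ k, x k * A k j) = Matrix.vecMul x A := by
    intro x; funext j; simp [Matrix.vecMul, dotProduct]
  have hstd : Matrix.vecMul (stdBasis n i) A = A i := by
    funext j
    simp [Matrix.vecMul, dotProduct, stdBasis]
  have key : ∀ x, ψ x + ψ (x + stdBasis n i)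
      = f (Matrix.vecMul x A) + f (Matrix.vecMul x A + A i) := by
    intro x
    rw [hψ, hψ, hvec, hvec, Matrix.add_vecMul, hstd]
  unfold BalancedBF
  rw [← hbal i]
  apply Finset.card_bij' (fun x _ => Matrix.vecMul x A) (fun y _ => Matrix.vecMul y (⅟A))
  · intro x hx
    simp only [Finset.mem_filter, Finset.mem_univ, true_and] at hx ⊢
    rw [← key x]; exact hx
  · intro y hy
    simp only [Finset.mem_filter, Finset.mem_univ, true_and] at hy ⊢
    rw [key, Matrix.vecMul_vecMul, invOf_mul_self, Matrix.vecMul_one]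
    exact hy
  · intro x _
    rw [Matrix.vecMul_vecMul, mul_invOf_self, Matrix.vecMul_one]
  · intro y _
    rw [Matrix.vecMul_vecMul, invOf_mul_self, Matrix.vecMul_one]
end

section
/- Let F : (Fin n → ZMod 2) → (Fin n → ZMod 2) be an S-box with coordinate functions f_i x = F x i such that for all j ≠ k in Fin n the Boolean function f_j + f_k satisfies the strict avalanche criterion. Let σ, τ : Equiv.Perm (Fin n) be permutations and let G be the clone S-box G x i = F (fun j => x (σ j)) (τ i) with coordinate functions g_i x = G x i. Then for all j ≠ k in Fin n, the Boolean function g_j + g_k satisfies the strict avalanche criterion. -/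
/-! Permuting the input coordinates by `σ` is a bijection of `(ZMod 2)ⁿ` carrying `x + e_i` to
`x ∘ σ + e_{σ⁻¹ i}`, so it preserves balancedness and hence SAC; permuting the output coordinates by
`τ` merely relabels the pair `(j, k)` as `(τ j, τ k)`, which is again a pair of distinct indices. -/

theorem BalancedBF.comp_equiv {n : ℕ} {f : (Fin n → ZMod 2) → ZMod 2} (hf : BalancedBF n f)
    (e : (Fin n → ZMod 2) ≃ (Fin n → ZMod 2)) : BalancedBF n (fun x => f (e x)) := by
  unfold BalancedBF at hf ⊢
  rw [← hf]
  exact Finset.card_equiv e (by simp)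

theorem stdBasis_comp_perm (n : ℕ) (σ : Equiv.Perm (Fin n)) (i : Fin n) :
    (fun l => stdBasis n i (σ l)) = stdBasis n (σ⁻¹ i) := by
  funext l
  simp only [stdBasis, Equiv.Perm.eq_inv_iff_eq]

theorem SAC.comp_perm {n : ℕ} {f : (Fin n → ZMod 2) → ZMod 2} (hf : SAC n f)
    (σ : Equiv.Perm (Fin n)) : SAC n (fun x => f (fun j => x (σ j))) := by
  intro i
  have hshift : ∀ x : Fin n → ZMod 2,
      (fun j => (x + stdBasis n i) (σ j)) = (fun j => x (σ j)) + stdBasis n (σ⁻¹ i) := by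
    intro x
    rw [← stdBasis_comp_perm]
    rfl
  simp only [hshift]
  exact (hf (σ⁻¹ i)).comp_equiv (Equiv.arrowCongr σ.symm (Equiv.refl _))

theorem clone_sbox_bic_sac_general
    (n : ℕ)
    (F : (Fin n → ZMod 2) → (Fin n → ZMod 2))
    (hF : ∀ j k : Fin n, j ≠ k → SAC n (fun x => F x j + F x k))
    (σ τ : Equiv.Perm (Fin n))
    (G : (Fin n → ZMod 2) → (Fin n → ZMod 2))
    (hG : ∀ x i, G x i = F (fun j => x (σ j)) (τ i)) :
    ∀ j k : Fin n, j ≠ k → SAC n (fun x => G x j + G x k) := by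
  intro j k hjk
  simp only [hG]
  exact (hF (τ j) (τ k) (τ.injective.ne hjk)).comp_perm σ

theorem clone_sbox_bic_sac
    (n : ℕ) (hn : 0 < n)
    (F : (Fin n → ZMod 2) → (Fin n → ZMod 2))
    (hF : ∀ j k : Fin n, j ≠ k → SAC n (fun x => F x j + F x k))
    (σ τ : Equiv.Perm (Fin n))
    (G : (Fin n → ZMod 2) → (Fin n → ZMod 2))
    (hG : ∀ x i, G x i = F (fun j => x (σ j)) (τ i)) :
    ∀ j k : Fin n, j ≠ k → SAC n (fun x => G x j + G x k) :=
  clone_sbox_bic_sac_general n F hF σ τ G hG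
end
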